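/- arXiv:2308.01359 — 3 statements merged into one kernel-verified Lean document; each statement's English description precedes it below -/
import Mathlib

section
/- Let G be a finite simple graph with maximum degree at most Δ, let K be a nonempty set of vertices of G, and let v ∈ K. If ã_v ≥ 0, ā_K ≤ ē_K/4 and ẽ_v ≤ ē_K/4, then Δ² − d̃(v) ≥ ē_K/2. -/
/-!
Since `|N²(u)| ≤ Δ²`, every `u ∈ K` satisfies `|K| + e_u = |N²(u)| + a_u ≤ Δ² + a_u`, and averaging
over `K` gives `|K| + ē_K ≤ Δ² + ā_K`. On the other hand `d̃(v) = (|K| − ã_v) + ẽ_v ≤ |K| + ẽ_v`, so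
`Δ² − d̃(v) ≥ ē_K − ā_K − ẽ_v ≥ ē_K / 2`.
-/

open Finset

variable {V : Type*} [Fintype V] [DecidableEq V]

/-- The distance-2 neighborhood of `v` in `G`: the neighborhood of `v` in the square graph `G²`. -/
def N2 (G : SimpleGraph V) [DecidableRel G.Adj] (v : V) : Finset V :=
  univ.filter fun u => u ≠ v ∧ (G.Adj v u ∨ ∃ w, G.Adj v w ∧ G.Adj w u)

lemma card_add_card_sdiff_comm {α : Type*} [DecidableEq α] (s t : Finset α) :
    #s + #(t \ s) = #t + #(s \ t) := by
  rw [add_comm, card_sdiff_add_card, add_comm #t, card_sdiff_add_card, union_comm]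

section

variable (G : SimpleGraph V) [DecidableRel G.Adj]

lemma N2_subset_biUnion (u : V) :
    N2 G u ⊆ (G.neighborFinset u).biUnion fun w => insert w ((G.neighborFinset w).erase u) := by
  intro x hx
  simp only [N2, mem_filter, mem_univ, true_and] at hx
  obtain ⟨hxu, hadj | ⟨w, huw, hwx⟩⟩ := hx
  · exact mem_biUnion.2 ⟨x, by simpa using hadj, mem_insert_self _ _⟩
  · exact mem_biUnion.2 ⟨w, by simpa using huw, by simp [hwx, hxu]⟩

lemma card_N2_le_sum_degree (u : V) :
    #(N2 G u) ≤ ∑ w ∈ G.neighborFinset u, G.degree w :=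
  (card_le_card (N2_subset_biUnion G u)).trans <| card_biUnion_le.trans <|
    sum_le_sum fun w hw =>
      have hu : u ∈ G.neighborFinset w := by simpa [G.adj_comm] using hw
      (card_insert_le _ _).trans_eq (card_erase_add_one hu)

lemma card_N2_le_sq {Δ : ℕ} (hdeg : ∀ u, G.degree u ≤ Δ) (u : V) : #(N2 G u) ≤ Δ ^ 2 :=
  calc #(N2 G u) ≤ ∑ w ∈ G.neighborFinset u, G.degree w := card_N2_le_sum_degree G u
    _ ≤ G.degree u • Δ := sum_le_card_nsmul _ _ Δ fun w _ => hdeg w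
    _ ≤ Δ ^ 2 := by rw [smul_eq_mul, sq]; exact Nat.mul_le_mul_right Δ (hdeg u)

variable {G}

lemma card_add_card_N2_sdiff_le {Δ : ℕ} (hdeg : ∀ u, G.degree u ≤ Δ) (K : Finset V) (u : V) :
    #K + #(N2 G u \ K) ≤ Δ ^ 2 + #(K \ N2 G u) := by
  rw [card_add_card_sdiff_comm]
  exact Nat.add_le_add_right (card_N2_le_sq G hdeg u) _

lemma card_add_avg_external_le {Δ : ℕ} (hdeg : ∀ u, G.degree u ≤ Δ) (K : Finset V) :
    (#K : ℝ) + (∑ u ∈ K, (#(N2 G u \ K) : ℝ)) / #K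
      ≤ (Δ : ℝ) ^ 2 + (∑ u ∈ K, (#(K \ N2 G u) : ℝ)) / #K := by
  rcases K.eq_empty_or_nonempty with rfl | hK
  · simp
  have hn : (#K : ℝ) ≠ 0 := by exact_mod_cast hK.card_pos.ne'
  have hsum : ∑ u ∈ K, ((#K : ℝ) + #(N2 G u \ K)) ≤ ∑ u ∈ K, ((Δ : ℝ) ^ 2 + #(K \ N2 G u)) :=
    sum_le_sum fun u _ => by exact_mod_cast card_add_card_N2_sdiff_le hdeg K u
  simp only [sum_add_distrib, sum_const, nsmul_eq_mul] at hsum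
  rw [add_div' _ _ _ hn, add_div' _ _ _ hn]
  gcongr ?_ / _
  linarith

end

theorem degree_slack_of_small_avg_general (G : SimpleGraph V) [DecidableRel G.Adj] (Δ : ℕ)
    (hdeg : ∀ u, G.degree u ≤ Δ)
    (K : Finset V) (v : V)
    (eBar aBar : ℝ)
    (heBar : eBar = (∑ u ∈ K, ((N2 G u \ K).card : ℝ)) / K.card)
    (haBar : aBar = (∑ u ∈ K, ((K \ N2 G u).card : ℝ)) / K.card)
    -- pseudo-anti-degree `ã_v = |K| − Σ_{u ∈ N(v)} |N(u) ∩ K|` is nonnegative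
    (hanti : (0 : ℝ) ≤ (K.card : ℝ)
        - ∑ u ∈ G.neighborFinset v, ((G.neighborFinset u ∩ K).card : ℝ))
    (ha : aBar ≤ eBar / 4)
    -- pseudo-external degree `ẽ_v = Σ_{u ∈ N(v)} |N(u) \ K|` is at most `ē_K/4`
    (he : (∑ u ∈ G.neighborFinset v, ((G.neighborFinset u \ K).card : ℝ)) ≤ eBar / 4) :
    eBar / 2 ≤ (Δ : ℝ) ^ 2
        - ∑ u ∈ G.neighborFinset v, ((G.neighborFinset u).card : ℝ) := by
  have hsplit : ∑ u ∈ G.neighborFinset v, (#(G.neighborFinset u) : ℝ)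
      = ∑ u ∈ G.neighborFinset v, (#(G.neighborFinset u ∩ K) : ℝ)
        + ∑ u ∈ G.neighborFinset v, (#(G.neighborFinset u \ K) : ℝ) := by
    rw [← sum_add_distrib]
    exact sum_congr rfl fun u _ => by exact_mod_cast (card_inter_add_card_sdiff _ K).symm
  have havg := card_add_avg_external_le hdeg K
  rw [← heBar, ← haBar] at havg
  linarith

/-- If `ã_v ≥ 0`, `ā_K ≤ ē_K/4` and `ẽ_v ≤ ē_K/4`, then `Δ² − d̃(v) ≥ ē_K/2`. -/
theorem degree_slack_of_small_avg (G : SimpleGraph V) [DecidableRel G.Adj] (Δ : ℕ)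
    (hdeg : ∀ u, G.degree u ≤ Δ)
    (K : Finset V) (hK : K.Nonempty) (v : V) (hv : v ∈ K)
    (eBar aBar : ℝ)
    (heBar : eBar = (∑ u ∈ K, ((N2 G u \ K).card : ℝ)) / K.card)
    (haBar : aBar = (∑ u ∈ K, ((K \ N2 G u).card : ℝ)) / K.card)
    -- pseudo-anti-degree `ã_v = |K| − Σ_{u ∈ N(v)} |N(u) ∩ K|` is nonnegative
    (hanti : (0 : ℝ) ≤ (K.card : ℝ)
        - ∑ u ∈ G.neighborFinset v, ((G.neighborFinset u ∩ K).card : ℝ))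
    (ha : aBar ≤ eBar / 4)
    -- pseudo-external degree `ẽ_v = Σ_{u ∈ N(v)} |N(u) \ K|` is at most `ē_K/4`
    (he : (∑ u ∈ G.neighborFinset v, ((G.neighborFinset u \ K).card : ℝ)) ≤ eBar / 4) :
    eBar / 2 ≤ (Δ : ℝ) ^ 2
        - ∑ u ∈ G.neighborFinset v, ((G.neighborFinset u).card : ℝ) :=
  degree_slack_of_small_avg_general G Δ hdeg K v eBar aBar heBar haBar hanti ha he
end

section
/- (Filtering Lemma.) Let K be a nonempty finite set, δ ∈ (0, 4/5), η = δ/(12(1−δ)), and x : K → ℝ with 1 ≤ x_v for all v ∈ K. Let ℓ ∈ ℕ be such that x_v < (1+η)^{ℓ+1} for all v, and for i = 0,…,ℓ set S_i = {v ∈ K : (1+η)^i ≤ x_v < (1+η)^{i+1}}. Suppose s_0,…,s_ℓ are reals with |S_i| ≤ s_i ≤ (1+η)³·|S_i| for every i. Let M ≥ 1 and suppose the set A = {v ∈ K : x_v ≤ M} has |A| ≥ (1−δ)|K|. Define τ as the least i ∈ {0,…,ℓ} with Σ_{j≤i} s_j ≥ (1−δ)|K| (such i exists), and let Ã = ∪_{j≤τ}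 S_j. Then |Ã| ≥ (1 − 1.5δ)|K| and every v ∈ Ã satisfies x_v ≤ (1+η)M ≤ 2M. -/
open Finset

/-!
Since every `x_v ≥ 1` lies below `(1+η)^(ℓ+1)`, the buckets `S_0, …, S_ℓ` partition `K`, so the
prefix sums of the `s_j` eventually reach `(1-δ)|K|`. At the least such index `τ`,
`(1+η)³ |Ã| ≥ Σ_{j≤τ} s_j ≥ (1-δ)|K|`, and `(1-δ)/(1+η)³ ≥ 1 - 1.5δ` for this choice of `η`.
If `(1+η)^τ > M`, the set `A = {x ≤ M}` would lie in `S_0 ∪ … ∪ S_{τ-1}`, whose `s`-mass is below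
`(1-δ)|K| ≤ |A|` by minimality of `τ`; hence `x_v < (1+η)^(τ+1) ≤ (1+η)M` on `Ã`.
-/

noncomputable def bucket {α : Type*} (K : Finset α) (b : ℝ) (x : α → ℝ) (i : ℕ) : Finset α :=
  K.filter fun v => b ^ i ≤ x v ∧ x v < b ^ (i + 1)

namespace bucket

variable {α : Type*} {K : Finset α} {b : ℝ} {x : α → ℝ}

theorem disjoint_of_lt (hb : 1 ≤ b) {i j : ℕ} (hij : i < j) :
    Disjoint (bucket K b x i) (bucket K b x j) := by
  refine disjoint_left.2 fun v hvi hvj => ?_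
  simp only [bucket, mem_filter] at hvi hvj
  have : b ^ (i + 1) ≤ b ^ j := pow_le_pow_right₀ hb hij
  linarith [hvi.2.2, hvj.2.1]

theorem pairwiseDisjoint (hb : 1 ≤ b) (s : Set ℕ) : s.PairwiseDisjoint (bucket K b x) :=
  fun _ _ _ _ hij => hij.lt_or_gt.elim (disjoint_of_lt hb) fun h => (disjoint_of_lt hb h).symm

theorem biUnion_range [DecidableEq α] (hb : 1 ≤ b) (n : ℕ) :
    (range n).biUnion (bucket K b x) = K.filter fun v => 1 ≤ x v ∧ x v < b ^ n := by
  induction n with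
  | zero => ext v; simp
  | succ n ih =>
    have hmono : b ^ n ≤ b ^ (n + 1) := pow_le_pow_right₀ hb n.le_succ
    have hone : 1 ≤ b ^ n := one_le_pow₀ hb
    ext v
    simp only [range_add_one, biUnion_insert, ih, bucket, mem_union, mem_filter]
    constructor
    · rintro (⟨hv, h1, h2⟩ | ⟨hv, h1, h2⟩)
      · exact ⟨hv, by linarith, h2⟩
      · exact ⟨hv, h1, by linarith⟩
    · rintro ⟨hv, h1, h2⟩
      by_cases h : b ^ n ≤ x v
      · exact Or.inl ⟨hv, h, h2⟩
      · exact Or.inr ⟨hv, h1, lt_of_not_ge h⟩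

theorem card_biUnion_range [DecidableEq α] (hb : 1 ≤ b) (n : ℕ) :
    (((range n).biUnion (bucket K b x)).card : ℝ) = ∑ j ∈ range n, ((bucket K b x j).card : ℝ) := by
  rw [card_biUnion (pairwiseDisjoint hb _)]
  push_cast
  rfl

theorem pow_le_of_forall_sum_lt [DecidableEq α] (hb : 1 ≤ b) (hx : ∀ v ∈ K, 1 ≤ x v)
    {s : ℕ → ℝ} {τ : ℕ} {c M : ℝ} (hs : ∀ j < τ, ((bucket K b x j).card : ℝ) ≤ s j)
    (hM : 1 ≤ M) (hA : c ≤ ((K.filter fun v => x v ≤ M).card : ℝ))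
    (hmin : ∀ i < τ, ∑ j ∈ range (i + 1), s j < c) : b ^ τ ≤ M := by
  obtain _ | t := τ
  · simpa using hM
  by_contra! hlt
  have hsub : K.filter (fun v => x v ≤ M) ⊆ (range (t + 1)).biUnion (bucket K b x) := by
    rw [biUnion_range hb]
    intro v hv
    rw [mem_filter] at hv ⊢
    exact ⟨hv.1, hx v hv.1, hv.2.trans_lt hlt⟩
  have : c < c :=
    calc c ≤ ((K.filter fun v => x v ≤ M).card : ℝ) := hA
      _ ≤ ((range (t + 1)).biUnion (bucket K b x)).card := by exact_mod_cast card_le_card hsub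
      _ ≤ ∑ j ∈ range (t + 1), ((bucket K b x j).card : ℝ) := by exact_mod_cast card_biUnion_le
      _ ≤ ∑ j ∈ range (t + 1), s j := sum_le_sum fun j hj => hs j (by have := mem_range.1 hj; omega)
      _ < c := hmin t t.lt_succ_self
  exact this.false

end bucket

theorem div_twelve_mul_one_sub_le_one_third {δ : ℝ} (hδ1 : δ < 4 / 5) :
    δ / (12 * (1 - δ)) ≤ 1 / 3 := by
  rw [div_le_iff₀ (by linarith)]
  linarith

theorem one_sub_mul_one_add_pow_three_le {δ η : ℝ} (hδ0 : 0 < δ) (hδ1 : δ < 4 / 5)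
    (hη : η = δ / (12 * (1 - δ))) : (1 - 1.5 * δ) * (1 + η) ^ 3 ≤ 1 - δ := by
  have hη0 : 0 ≤ η := by rw [hη]; exact div_nonneg hδ0.le (by linarith)
  have hη3 : η ≤ 1 / 3 := hη ▸ div_twelve_mul_one_sub_le_one_third hδ1
  have hηδ : 12 * η * (1 - δ) = δ := by
    rw [hη]; field_simp [show 1 - δ ≠ 0 by linarith]
  have hcube : (1 + η) ^ 3 ≤ 1 + 4.5 * η := by
    have hsq : η ^ 2 ≤ η / 3 := by nlinarith
    have hcb : η ^ 3 ≤ η / 9 := by nlinarith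
    nlinarith
  rcases le_or_gt (1 - 1.5 * δ) 0 with hneg | hpos
  · nlinarith [pow_pos (by linarith : (0:ℝ) < 1 + η) 3]
  · calc (1 - 1.5 * δ) * (1 + η) ^ 3 ≤ (1 - 1.5 * δ) * (1 + 4.5 * η) := by gcongr
      _ ≤ 1 - δ := by nlinarith

theorem filtering_lemma_general {α : Type*} [DecidableEq α]
    (K : Finset α)
    (δ : ℝ) (hδ0 : 0 < δ) (hδ1 : δ < 4 / 5)
    (η : ℝ) (hη : η = δ / (12 * (1 - δ)))
    (x : α → ℝ) (hx : ∀ v ∈ K, 1 ≤ x v)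
    (ℓ : ℕ) (hℓ : ∀ v ∈ K, x v < (1 + η) ^ (ℓ + 1))
    (S : ℕ → Finset α)
    (hS : ∀ i, S i = K.filter fun v => (1 + η) ^ i ≤ x v ∧ x v < (1 + η) ^ (i + 1))
    (s : ℕ → ℝ)
    (hs : ∀ i ≤ ℓ, ((S i).card : ℝ) ≤ s i ∧ s i ≤ (1 + η) ^ 3 * (S i).card)
    (M : ℝ) (hM : 1 ≤ M)
    (hA : (1 - δ) * K.card ≤ ((K.filter fun v => x v ≤ M).card : ℝ)) :
    (∃ i ≤ ℓ, (1 - δ) * K.card ≤ ∑ j ∈ Finset.range (i + 1), s j) ∧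
    ∀ τ ≤ ℓ, (1 - δ) * K.card ≤ ∑ j ∈ Finset.range (τ + 1), s j →
      (∀ i < τ, ∑ j ∈ Finset.range (i + 1), s j < (1 - δ) * K.card) →
      (1 - 1.5 * δ) * K.card ≤ (((Finset.range (τ + 1)).biUnion S).card : ℝ) ∧
      ∀ v ∈ (Finset.range (τ + 1)).biUnion S,
        x v ≤ (1 + η) * M ∧ (1 + η) * M ≤ 2 * M := by
  obtain rfl : S = bucket K (1 + η) x := funext hS
  have hη0 : 0 ≤ η := by rw [hη]; exact div_nonneg hδ0.le (by linarith)
  have hb : 1 ≤ 1 + η := by linarith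
  have hcover : (range (ℓ + 1)).biUnion (bucket K (1 + η) x) = K := by
    rw [bucket.biUnion_range hb]
    exact filter_true_of_mem fun v hv => ⟨hx v hv, hℓ v hv⟩
  refine ⟨⟨ℓ, le_rfl, ?_⟩, fun τ hτ hge hmin => ⟨?_, fun v hv => ?_⟩⟩
  · calc (1 - δ) * K.card ≤ K.card := mul_le_of_le_one_left (Nat.cast_nonneg _) (by linarith)
      _ = ∑ j ∈ range (ℓ + 1), ((bucket K (1 + η) x j).card : ℝ) := by
        rw [← bucket.card_biUnion_range hb, hcover]
      _ ≤ ∑ j ∈ range (ℓ + 1), s j :=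
        sum_le_sum fun j hj => (hs j (Nat.lt_succ_iff.1 (mem_range.1 hj))).1
  · refine le_of_mul_le_mul_left ?_ (pow_pos (by linarith : (0:ℝ) < 1 + η) 3)
    calc (1 + η) ^ 3 * ((1 - 1.5 * δ) * K.card) = (1 - 1.5 * δ) * (1 + η) ^ 3 * K.card := by ring
      _ ≤ (1 - δ) * K.card := by gcongr; exact one_sub_mul_one_add_pow_three_le hδ0 hδ1 hη
      _ ≤ ∑ j ∈ range (τ + 1), s j := hge
      _ ≤ ∑ j ∈ range (τ + 1), (1 + η) ^ 3 * ((bucket K (1 + η) x j).card : ℝ) :=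
        sum_le_sum fun j hj => (hs j (by have := mem_range.1 hj; omega)).2
      _ = (1 + η) ^ 3 * (((range (τ + 1)).biUnion (bucket K (1 + η) x)).card : ℝ) := by
        rw [bucket.card_biUnion_range hb, mul_sum]
  · have hτM : (1 + η) ^ τ ≤ M :=
      bucket.pow_le_of_forall_sum_lt hb hx (fun j hj => (hs j (by omega)).1) hM hA hmin
    have hη1 : η ≤ 1 := by linarith [hη ▸ div_twelve_mul_one_sub_le_one_third hδ1]
    rw [bucket.biUnion_range hb, mem_filter, pow_succ] at hv
    constructor
    · calc x v ≤ (1 + η) ^ τ * (1 + η) := hv.2.2.le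
        _ ≤ M * (1 + η) := by gcongr
        _ = (1 + η) * M := mul_comm _ _
    · nlinarith

/-- **Filtering Lemma.** Buckets `S i` partition `K` geometrically according to `x`,
the `s i` approximate the bucket sizes within a factor `(1+η)³`, and at least a
`(1−δ)` fraction of `K` has `x_v ≤ M`. Then a least index `τ` with
`Σ_{j≤τ} s j ≥ (1−δ)|K|` exists, and `Ã = ∪_{j≤τ} S j` satisfies
`|Ã| ≥ (1 − 1.5δ)|K|` and `x_v ≤ (1+η)M ≤ 2M` for every `v ∈ Ã`. -/
theorem filtering_lemma {α : Type*} [DecidableEq α]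
    (K : Finset α) (hK : K.Nonempty)
    (δ : ℝ) (hδ0 : 0 < δ) (hδ1 : δ < 4 / 5)
    (η : ℝ) (hη : η = δ / (12 * (1 - δ)))
    (x : α → ℝ) (hx : ∀ v ∈ K, 1 ≤ x v)
    (ℓ : ℕ) (hℓ : ∀ v ∈ K, x v < (1 + η) ^ (ℓ + 1))
    (S : ℕ → Finset α)
    (hS : ∀ i, S i = K.filter fun v => (1 + η) ^ i ≤ x v ∧ x v < (1 + η) ^ (i + 1))
    (s : ℕ → ℝ)
    (hs : ∀ i ≤ ℓ, ((S i).card : ℝ) ≤ s i ∧ s i ≤ (1 + η) ^ 3 * (S i).card)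
    (M : ℝ) (hM : 1 ≤ M)
    (hA : (1 - δ) * K.card ≤ ((K.filter fun v => x v ≤ M).card : ℝ)) :
    (∃ i ≤ ℓ, (1 - δ) * K.card ≤ ∑ j ∈ Finset.range (i + 1), s j) ∧
    ∀ τ ≤ ℓ, (1 - δ) * K.card ≤ ∑ j ∈ Finset.range (τ + 1), s j →
      (∀ i < τ, ∑ j ∈ Finset.range (i + 1), s j < (1 - δ) * K.card) →
      (1 - 1.5 * δ) * K.card ≤ (((Finset.range (τ + 1)).biUnion S).card : ℝ) ∧
      ∀ v ∈ (Finset.range (τ + 1)).biUnion S,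
        x v ≤ (1 + η) * M ∧ (1 + η) * M ≤ 2 * M :=
  filtering_lemma_general K δ hδ0 hδ1 η hη x hx ℓ hℓ S hS s hs M hM hA
end

section
/- There exist universal constants C, c > 0 such that the following holds. For all reals α, β, ν ∈ (0, 1) with α ≤ β and every integer λ ≥ C·α⁻¹·β⁻²·log(1/ν), there exists an integer σ with c·β⁻²·α⁻¹·log(1/ν) ≤ σ ≤ λ such that: for every finite set U and all sets A, B ⊆ U with |A| ≥ αλ and |A|, |B| ≤ βλ, if h : U → [λ] is chosen uniformly at random among all functions from U to [λ], then with probability at least 1 − ν/2 one has |{x ∈ A : h(x) ∈ [σ] and h(x) ∉ h(B \ {x})}| ≥ (σ|A|/λ)(1 − 3β). -/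
/-!
Take `σ = λ` and let `Y h` count the `x ∈ A` with `h x ∈ h (B \ {x})`; it suffices that
`Y ≤ 3μ`, `μ = β|A|`, outside a set of probability `ν/2`. Each `x` collides with probability at
most `|B|/λ ≤ β`, so `𝔼 Y ≤ μ` and Markov's inequality settles `ν > 2/3`.

For small `ν`, enumerate `A` with the elements of `B` first and reveal `h` on these elements one at
a time, after all other values. `Y` is at most twice the number of steps at which the new value
hits the image of the part of `B` revealed so far, and every step hits with conditional
probability at most `β`. Hence `𝔼 (6/5)^hits ≤ exp (μ/5)`, whereas `hits > 3μ/2` forces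
`(6/5)^hits ≥ exp (μ/4)`; as `μ ≥ 60 log (1/ν)`, the failure probability is at most
`exp (-μ/20) ≤ ν³ ≤ ν/2`.
-/

open Finset Function

theorem card_filter_mul_le_sum {ι : Type*} (s : Finset ι) (p : ι → Prop) [DecidablePred p]
    {f : ι → ℝ} {c : ℝ} (hf : ∀ i ∈ s, 0 ≤ f i) (hc : ∀ i ∈ s, p i → c ≤ f i) :
    #(s.filter p) * c ≤ ∑ i ∈ s, f i :=
  calc #(s.filter p) * c = ∑ _i ∈ s.filter p, c := by rw [sum_const, nsmul_eq_mul]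
    _ ≤ ∑ i ∈ s.filter p, f i :=
        sum_le_sum fun i hi => hc i (mem_filter.1 hi).1 (mem_filter.1 hi).2
    _ ≤ ∑ i ∈ s, f i := sum_le_sum_of_subset_of_nonneg (filter_subset p s) fun i hi _ => hf i hi

section Averaging

variable {U V : Type*} [Fintype U] [DecidableEq U] [Fintype V]

theorem sum_sum_update (a : U) (Φ : (U → V) → ℝ) :
    ∑ h : U → V, ∑ v, Φ (update h a v) = Fintype.card V * ∑ h, Φ h := by
  have hinv : Involutive fun p : (U → V) × V => (update p.1 a p.2, p.1 a) := by
    rintro ⟨h, v⟩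
    simp
  calc ∑ h : U → V, ∑ v, Φ (update h a v)
      = ∑ p : (U → V) × V, Φ (hinv.toPerm _ p).1 := (Fintype.sum_prod_type' _).symm
    _ = ∑ p : (U → V) × V, Φ p.1 := Equiv.sum_comp (hinv.toPerm _) (fun p => Φ p.1)
    _ = Fintype.card V * ∑ h, Φ h := by
        rw [Fintype.sum_prod_type, Finset.mul_sum]
        simp

theorem sum_mul_le_of_sum_update_le [Nonempty V] (a : U) {F G : (U → V) → ℝ} {K : ℝ}
    (hF : ∀ h v, F (update h a v) = F h) (hF₀ : ∀ h, 0 ≤ F h)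
    (hG : ∀ h, ∑ v, G (update h a v) ≤ Fintype.card V * K) :
    ∑ h, F h * G h ≤ K * ∑ h, F h := by
  have hV : (0 : ℝ) < Fintype.card V := by exact_mod_cast Fintype.card_pos
  refine le_of_mul_le_mul_left ?_ hV
  calc (Fintype.card V : ℝ) * ∑ h, F h * G h
      = ∑ h, F h * ∑ v, G (update h a v) := by
        simp only [← sum_sum_update a, Finset.mul_sum, hF]
    _ ≤ ∑ h, F h * (Fintype.card V * K) := by gcongr with h; exacts [hF₀ h, hG h]
    _ = Fintype.card V * (K * ∑ h, F h) := by rw [← Finset.sum_mul]; ring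

theorem sum_prod_le_prod_mul_card [Nonempty V] {k : ℕ} (x : Fin k → U)
    (f : Fin k → (U → V) → ℝ) (K : Fin k → ℝ) (hf₀ : ∀ i h, 0 ≤ f i h)
    (hf : ∀ i j, i < j → ∀ h v, f i (update h (x j) v) = f i h)
    (hK : ∀ i h, ∑ v, f i (update h (x i) v) ≤ Fintype.card V * K i) :
    ∑ h, ∏ i, f i h ≤ (∏ i, K i) * Fintype.card (U → V) := by
  induction k with
  | zero => simp
  | succ k ih =>
    have hK₀ : 0 ≤ K (Fin.last k) := by
      let h₀ : U → V := fun _ => Classical.arbitrary V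
      exact nonneg_of_mul_nonneg_right
        ((sum_nonneg fun v _ => hf₀ _ (update h₀ _ v)).trans (hK (Fin.last k) h₀))
        (by exact_mod_cast Fintype.card_pos)
    simp only [Fin.prod_univ_castSucc]
    calc ∑ h, (∏ i : Fin k, f i.castSucc h) * f (Fin.last k) h
        ≤ K (Fin.last k) * ∑ h, ∏ i : Fin k, f i.castSucc h := by
          refine sum_mul_le_of_sum_update_le (x (Fin.last k)) (fun h v => ?_)
            (fun h => prod_nonneg fun i _ => hf₀ _ h) (hK _)
          exact prod_congr rfl fun i _ => hf _ _ (Fin.castSucc_lt_last i) h v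
      _ ≤ K (Fin.last k) * ((∏ i : Fin k, K i.castSucc) * Fintype.card (U → V)) := by
          gcongr
          exact ih _ _ _ (fun i => hf₀ _) (fun i j hij => hf _ _ (by simpa using hij))
            (fun i => hK _)
      _ = _ := by ring

end Averaging

section Collisions

variable {U V : Type*} [DecidableEq U] [DecidableEq V]

def collisions (A B : Finset U) (h : U → V) : Finset U :=
  A.filter fun a => h a ∈ (B.erase a).image h

theorem image_update_of_notMem {S : Finset U} {a : U} (ha : a ∉ S) (h : U → V) (v : V) :
    S.image (update h a v) = S.image h :=
  image_congr fun _ hy => update_of_ne (ne_of_mem_of_not_mem hy ha) v h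

variable [Fintype V]

theorem sum_ite_update_mem_image {S : Finset U} {a : U} (ha : a ∉ S) (h : U → V) (p q : ℝ) :
    ∑ v, (if update h a v a ∈ S.image (update h a v) then p else q)
      = #(S.image h) * p + (Fintype.card V - #(S.image h)) * q := by
  simp only [update_self, image_update_of_notMem ha, Finset.sum_ite, sum_const,
    Finset.filter_mem_eq_inter, univ_inter, nsmul_eq_mul]
  rw [Finset.filter_not, Finset.filter_mem_eq_inter, univ_inter,
    card_sdiff_of_subset (subset_univ _), card_univ, Nat.cast_sub (card_le_univ _)]

variable [Fintype U]

theorem sum_card_collisions_le [Nonempty V] (A B : Finset U) :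
    ∑ h : U → V, (#(collisions A B h) : ℝ)
      ≤ #A * (#B / Fintype.card V) * Fintype.card (U → V) := by
  have hV : (0 : ℝ) < Fintype.card V := by exact_mod_cast Fintype.card_pos
  have single (a : U) :
      ∑ h : U → V, (if h a ∈ (B.erase a).image h then 1 else 0 : ℝ)
        ≤ #B / Fintype.card V * Fintype.card (U → V) := by
    have hG (h : U → V) :
        ∑ v, (if update h a v a ∈ (B.erase a).image (update h a v) then 1 else 0 : ℝ)
          ≤ Fintype.card V * (#B / Fintype.card V) := by
      rw [sum_ite_update_mem_image (notMem_erase a B), mul_div_cancel₀ _ hV.ne']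
      simpa using card_image_le.trans (card_erase_le (s := B) (a := a))
    simpa [card_univ] using sum_mul_le_of_sum_update_le a (F := fun _ => 1)
      (G := fun h => if h a ∈ (B.erase a).image h then 1 else 0) (fun _ _ => rfl)
      (fun _ => zero_le_one) hG
  calc ∑ h : U → V, (#(collisions A B h) : ℝ)
      = ∑ a ∈ A, ∑ h : U → V, (if h a ∈ (B.erase a).image h then 1 else 0 : ℝ) := by
        simp only [collisions, card_filter, Nat.cast_sum, Nat.cast_ite, Nat.cast_one, Nat.cast_zero]
        exact sum_comm
    _ ≤ ∑ _a ∈ A, (#B : ℝ) / Fintype.card V * Fintype.card (U → V) :=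
        sum_le_sum fun a _ => single a
    _ = _ := by rw [sum_const, nsmul_eq_mul, mul_assoc]

end Collisions

section Exposure

variable {U V : Type*} [DecidableEq U] [DecidableEq V]

theorem exists_injective_image_eq_antitone_mem (A B : Finset U) :
    ∃ (k : ℕ) (x : Fin k → U), Injective x ∧ univ.image x = A ∧
      Antitone fun i => x i ∈ B := by
  set l := (A ∩ B).toList ++ (A \ B).toList
  have hnodup : l.Nodup := (nodup_toList _).append (nodup_toList _)
    (List.disjoint_left.2 fun a ha hb => by simp_all)
  refine ⟨l.length, l.get, List.nodup_iff_injective_get.1 hnodup, ?_, fun i j hij hj => ?_⟩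
  · ext a
    simp only [mem_image, mem_univ, true_and, ← List.mem_iff_get, l, List.mem_append, mem_toList,
      mem_inter, mem_sdiff]
    tauto
  · have hmem (n : ℕ) (hn : n < l.length) : l[n] ∈ B ↔ n < #(A ∩ B) := by
      simp only [l, List.getElem_append, length_toList]
      split_ifs with hn'
      · exact iff_of_true (mem_inter.1 (mem_toList.1 (List.getElem_mem _))).2 hn'
      · exact iff_of_false (mem_sdiff.1 (mem_toList.1 (List.getElem_mem _))).2 hn'
    exact (hmem i i.2).2 (lt_of_le_of_lt hij ((hmem j j.2).1 hj))

variable {k : ℕ} (x : Fin k → U) (B : Finset U)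

/-- Revealing `h (x 0), h (x 1), …` after all values of `h` outside the range of `x`, this is the
part of `B` whose values are known before step `i`. -/
def revealedBefore (i : Fin k) : Finset U := B \ (Ici i).image x

def hitsRevealed (h : U → V) : Finset (Fin k) :=
  {i | h (x i) ∈ (revealedBefore x B i).image h}

variable {x B}

theorem notMem_revealedBefore {i j : Fin k} (hij : i ≤ j) : x j ∉ revealedBefore x B i :=
  fun hj => (mem_sdiff.1 hj).2 (mem_image_of_mem x (mem_Ici.2 hij))

theorem mem_revealedBefore (hx : Injective x) {i j : Fin k} (hij : i < j) (hi : x i ∈ B) :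
    x i ∈ revealedBefore x B j := by
  refine mem_sdiff.2 ⟨hi, fun hmem => ?_⟩
  obtain ⟨l, hl, hxl⟩ := mem_image.1 hmem
  exact (mem_Ici.1 hl).not_gt (hx hxl ▸ hij)

theorem mem_hitsRevealed_of_lt (hx : Injective x) {h : U → V} {i j : Fin k} (hij : i < j)
    (hi : x i ∈ B) (hxij : h (x i) = h (x j)) : j ∈ hitsRevealed x B h :=
  mem_filter.2 ⟨mem_univ _, hxij ▸ mem_image_of_mem h (mem_revealedBefore hx hij hi)⟩

/-- Each index of `hitsRevealed` pays for its own collision and for at most one earlier colliding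
index outside `hitsRevealed`: that earlier index lies in `B`, as `B` is enumerated first, so a
second one would be a hit. -/
theorem card_collisions_le_two_mul_card_hitsRevealed (hx : Injective x)
    (hB : Antitone fun i => x i ∈ B) (h : U → V) :
    #(collisions (univ.image x) B h) ≤ 2 * #(hitsRevealed x B h) := by
  set bad : Finset (Fin k) := {i | h (x i) ∈ (B.erase (x i)).image h}
  have hbad : collisions (univ.image x) B h = bad.image x := filter_image
  have hsub : hitsRevealed x B h ⊆ bad := by
    refine fun i hi => mem_filter.2 ⟨mem_univ _, image_subset_image (fun y hy => ?_)
      (mem_filter.1 hi).2⟩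
    exact mem_erase.2 ⟨fun hyx => notMem_revealedBefore le_rfl (hyx ▸ hy), (mem_sdiff.1 hy).1⟩
  have later : ∀ i ∈ bad \ hitsRevealed x B h, ∃ j, i < j ∧ x j ∈ B ∧ h (x j) = h (x i) := by
    intro i hi
    obtain ⟨hbadi, hnot⟩ := mem_sdiff.1 hi
    obtain ⟨y, hy, hyi⟩ := mem_image.1 (mem_filter.1 hbadi).2
    obtain ⟨hyx, hyB⟩ := mem_erase.1 hy
    have : y ∉ revealedBefore x B i := fun hrev =>
      hnot (mem_filter.2 ⟨mem_univ _, hyi ▸ mem_image_of_mem h hrev⟩)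
    obtain ⟨j, hij, rfl⟩ : ∃ j, i ≤ j ∧ x j = y := by simpa [revealedBefore, hyB] using this
    exact ⟨j, hij.lt_of_ne fun hij => hyx (hij ▸ rfl), hyB, hyi⟩
  choose! g hg using later
  have hcard : #(bad \ hitsRevealed x B h) ≤ #(hitsRevealed x B h) := by
    refine card_le_card_of_injOn g (fun i hi => ?_) (fun i hi i' hi' hgg => ?_)
    · obtain ⟨hlt, hgB, hgi⟩ := hg i hi
      exact mem_hitsRevealed_of_lt hx hlt (hB hlt.le hgB) hgi.symm
    · by_contra hne
      wlog hlt : i < i' generalizing i i'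
      · exact this i' hi' i hi hgg.symm (Ne.symm hne) ((not_lt.1 hlt).lt_of_ne (Ne.symm hne))
      obtain ⟨hlt', hgB, hgi⟩ := hg i hi
      exact (mem_sdiff.1 hi').2 (mem_hitsRevealed_of_lt hx hlt (hB hlt'.le hgB)
        (hgi.symm.trans (hgg ▸ (hg i' hi').2.2)))
  rw [hbad, card_image_of_injective _ hx, ← card_sdiff_add_card_eq_card hsub]
  omega

theorem sum_pow_card_hitsRevealed_le [Fintype U] [Fintype V] [Nonempty V] (hx : Injective x)
    {t : ℝ} (ht : 1 ≤ t) :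
    ∑ h : U → V, t ^ #(hitsRevealed x B h)
      ≤ Real.exp ((t - 1) * #B / Fintype.card V) ^ k * Fintype.card (U → V) := by
  have hV : (0 : ℝ) < Fintype.card V := by exact_mod_cast Fintype.card_pos
  let f (i : Fin k) (h : U → V) : ℝ := if h (x i) ∈ (revealedBefore x B i).image h then t else 1
  have hprod (h : U → V) : ∏ i, f i h = t ^ #(hitsRevealed x B h) := by
    simp [f, prod_ite, hitsRevealed]
  have hf (i j : Fin k) (hij : i < j) (h : U → V) (v : V) : f i (update h (x j) v) = f i h := by
    simp only [f, update_of_ne (hx.ne hij.ne),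
      image_update_of_notMem (notMem_revealedBefore hij.le)]
  have hK (i : Fin k) (h : U → V) :
      ∑ v, f i (update h (x i) v) ≤ Fintype.card V * Real.exp ((t - 1) * #B / Fintype.card V) := by
    have hcard : (#((revealedBefore x B i).image h) : ℝ) ≤ #B := by
      exact_mod_cast card_image_le.trans (card_le_card sdiff_subset)
    calc ∑ v, f i (update h (x i) v)
        = #((revealedBefore x B i).image h) * t
            + (Fintype.card V - #((revealedBefore x B i).image h)) * 1 :=
          sum_ite_update_mem_image (notMem_revealedBefore le_rfl) h t 1
      _ ≤ Fintype.card V * ((t - 1) * #B / Fintype.card V + 1) := by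
          rw [mul_add, mul_div_cancel₀ _ hV.ne']
          nlinarith
      _ ≤ _ := by gcongr; exact Real.add_one_le_exp _
  calc ∑ h : U → V, t ^ #(hitsRevealed x B h) = ∑ h, ∏ i, f i h := by simp only [hprod]
    _ ≤ (∏ _i : Fin k, Real.exp ((t - 1) * #B / Fintype.card V)) * Fintype.card (U → V) :=
        sum_prod_le_prod_mul_card x f _ (fun i h => by positivity) hf hK
    _ = _ := by rw [prod_const, card_univ, Fintype.card_fin]

end Exposure

section TailBounds

variable {U V : Type*} [Fintype U] [DecidableEq U] [Fintype V] [DecidableEq V] [Nonempty V]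

theorem card_collisions_gt_le_third (A B : Finset U) {μ : ℝ} (hμ : 0 < μ)
    (hAB : #A * #B ≤ μ * Fintype.card V) :
    (#{h : U → V | 3 * μ < #(collisions A B h)} : ℝ) ≤ Fintype.card (U → V) / 3 := by
  have hV : (0 : ℝ) < Fintype.card V := by exact_mod_cast Fintype.card_pos
  have hmean : (#A : ℝ) * (#B / Fintype.card V) ≤ μ := by
    rw [← mul_div_assoc, div_le_iff₀ hV]; exact hAB
  have hmarkov := card_filter_mul_le_sum univ (fun h : U → V => 3 * μ < #(collisions A B h))
    (fun h _ => Nat.cast_nonneg _) fun h _ hh => hh.le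
  have := sum_card_collisions_le (V := V) A B
  rw [le_div_iff₀ (by norm_num : (0 : ℝ) < 3)]
  nlinarith [(Fintype.card (U → V)).cast_nonneg (α := ℝ)]

theorem card_collisions_gt_le_exp (A B : Finset U) {μ : ℝ}
    (hAB : #A * #B ≤ μ * Fintype.card V) :
    (#{h : U → V | 3 * μ < #(collisions A B h)} : ℝ)
      ≤ Real.exp (-(μ / 20)) * Fintype.card (U → V) := by
  obtain ⟨k, x, hx, rfl, hxB⟩ := exists_injective_image_eq_antitone_mem A B
  have hV : (0 : ℝ) < Fintype.card V := by exact_mod_cast Fintype.card_pos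
  have hk : #(univ.image x) = k := by rw [card_image_of_injective _ hx, card_univ, Fintype.card_fin]
  set t : ℝ := 6 / 5
  have ht : Real.exp (1 / 6) ≤ t := by
    rw [← Real.le_log_iff_exp_le (by norm_num)]
    linarith [Real.one_sub_inv_le_log_of_pos (x := t) (by norm_num)]
  have hbad (h : U → V) (hh : 3 * μ < #(collisions (univ.image x) B h)) :
      Real.exp (μ / 4) ≤ t ^ #(hitsRevealed x B h) := by
    have hcount : (#(collisions (univ.image x) B h) : ℝ) ≤ 2 * #(hitsRevealed x B h) := by
      exact_mod_cast card_collisions_le_two_mul_card_hitsRevealed hx hxB h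
    calc Real.exp (μ / 4) ≤ Real.exp (#(hitsRevealed x B h) * (1 / 6)) :=
          Real.exp_le_exp.2 (by linarith)
      _ = Real.exp (1 / 6) ^ #(hitsRevealed x B h) := Real.exp_nat_mul _ _
      _ ≤ t ^ #(hitsRevealed x B h) := pow_le_pow_left₀ (Real.exp_pos _).le ht _
  have hmgf : Real.exp ((t - 1) * #B / Fintype.card V) ^ k ≤ Real.exp (μ / 5) := by
    rw [hk] at hAB
    have hmean : (k : ℝ) * #B / Fintype.card V ≤ μ := by rwa [div_le_iff₀ hV]
    rw [← Real.exp_nat_mul, Real.exp_le_exp]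
    linarith [show (k : ℝ) * ((t - 1) * #B / Fintype.card V) = k * #B / Fintype.card V / 5 by
      ring]
  have hmarkov := card_filter_mul_le_sum univ
    (fun h : U → V => 3 * μ < #(collisions (univ.image x) B h)) (fun h _ => by positivity)
    fun h _ => hbad h
  have hsum := sum_pow_card_hitsRevealed_le (V := V) (B := B) hx (t := t) (by norm_num)
  rw [show -(μ / 20) = μ / 5 - μ / 4 by ring, Real.exp_sub, div_mul_eq_mul_div,
    le_div_iff₀ (Real.exp_pos _)]
  nlinarith [(Fintype.card (U → V)).cast_nonneg (α := ℝ)]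

theorem card_collisions_gt_le (A B : Finset U) {ν μ : ℝ} (hν₀ : 0 < ν) (hν₁ : ν < 1)
    (hμ : 60 * Real.log (1 / ν) ≤ μ) (hAB : #A * #B ≤ μ * Fintype.card V) :
    (#{h : U → V | 3 * μ < #(collisions A B h)} : ℝ) ≤ ν / 2 * Fintype.card (U → V) := by
  have hN : (0 : ℝ) ≤ Fintype.card (U → V) := Nat.cast_nonneg _
  rw [one_div, Real.log_inv] at hμ
  rcases le_or_gt ν (2 / 3) with hν | hν
  · refine (card_collisions_gt_le_exp A B hAB).trans (mul_le_mul_of_nonneg_right ?_ hN)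
    calc Real.exp (-(μ / 20)) ≤ Real.exp (Real.log (ν ^ 3)) := by
          rw [Real.log_pow, Real.exp_le_exp]; push_cast; linarith
      _ = ν ^ 3 := Real.exp_log (by positivity)
      _ ≤ ν / 2 := by nlinarith [mul_le_mul hν hν hν₀.le (by norm_num)]
  · have hlog : Real.log ν < 0 := Real.log_neg hν₀ hν₁
    calc _ ≤ (Fintype.card (U → V) : ℝ) / 3 := card_collisions_gt_le_third A B (by linarith) hAB
      _ ≤ ν / 2 * Fintype.card (U → V) := by nlinarith

theorem card_collisions_le_ge (A B : Finset U) {ν μ : ℝ} (hν₀ : 0 < ν) (hν₁ : ν < 1)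
    (hμ : 60 * Real.log (1 / ν) ≤ μ) (hAB : #A * #B ≤ μ * Fintype.card V) :
    (1 - ν / 2) * Fintype.card (U → V) ≤ #{h : U → V | #(collisions A B h) ≤ 3 * μ} := by
  have hsplit : ((#{h : U → V | 3 * μ < #(collisions A B h)} : ℕ) : ℝ)
      + #{h : U → V | #(collisions A B h) ≤ 3 * μ} = Fintype.card (U → V) := by
    simp_rw [← not_lt]
    exact_mod_cast card_filter_add_card_filter_not _
  linarith [card_collisions_gt_le A B hν₀ hν₁ hμ hAB]

end TailBounds

/-- **Claim 1 of Halldórsson–Nolin–Tonoyan.** There are universal constants `C, c > 0`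
such that: for all `α, β, ν ∈ (0,1)` with `α ≤ β` and every integer
`λ ≥ C·α⁻¹·β⁻²·log(1/ν)`, there is an integer `σ` with
`c·β⁻²·α⁻¹·log(1/ν) ≤ σ ≤ λ` such that for every finite set `U` and all `A, B ⊆ U` with
`|A| ≥ αλ` and `|A|, |B| ≤ βλ`, a uniformly random function `h : U → [λ]` satisfies,
with probability at least `1 − ν/2`,
`|{x ∈ A : h(x) ∈ [σ] and h(x) ∉ h(B \ {x})}| ≥ (σ|A|/λ)(1 − 3β)`. -/
theorem random_function_representative :
    ∃ C c : ℝ, 0 < C ∧ 0 < c ∧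
      ∀ α β ν : ℝ, 0 < α → α < 1 → 0 < β → β < 1 → 0 < ν → ν < 1 → α ≤ β →
      ∀ lam : ℕ, C * α⁻¹ * (β ^ 2)⁻¹ * Real.log (1 / ν) ≤ lam →
      ∃ σ : ℕ, c * (β ^ 2)⁻¹ * α⁻¹ * Real.log (1 / ν) ≤ σ ∧ σ ≤ lam ∧
        ∀ (U : Type) [Fintype U] [DecidableEq U], ∀ A B : Finset U,
          α * lam ≤ (A.card : ℝ) → (A.card : ℝ) ≤ β * lam → (B.card : ℝ) ≤ β * lam →
          (1 - ν / 2) * (Fintype.card (U → Fin lam) : ℝ) ≤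
            (((Finset.univ : Finset (U → Fin lam)).filter fun h =>
                (σ : ℝ) * A.card / lam * (1 - 3 * β) ≤
                  ((A.filter fun z => (h z).val < σ ∧ h z ∉ (B.erase z).image h).card : ℝ)).card : ℝ) := by
  refine ⟨60, 60, by norm_num, by norm_num, fun α β ν hα₀ _ hβ₀ hβ₁ hν₀ hν₁ _ lam hlam => ?_⟩
  have hL : 0 < Real.log (1 / ν) := Real.log_pos (by rw [one_div]; exact (one_lt_inv₀ hν₀).2 hν₁)
  have hlam₀ : (0 : ℝ) < lam := lt_of_lt_of_le (by positivity) hlam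
  refine ⟨lam, by linarith [show 60 * (β ^ 2)⁻¹ * α⁻¹ = 60 * α⁻¹ * (β ^ 2)⁻¹ by ring], le_rfl,
    fun U _ _ A B hA _ hB => ?_⟩
  have : NeZero lam := ⟨by exact_mod_cast hlam₀.ne'⟩
  have hμ : 60 * Real.log (1 / ν) ≤ β * #A := by
    have : 60 * Real.log (1 / ν) ≤ α * β * lam := by
      calc 60 * Real.log (1 / ν) ≤ 60 * Real.log (1 / ν) / β :=
            le_div_self (by positivity) hβ₀ hβ₁.le
        _ = α * β * (60 * α⁻¹ * (β ^ 2)⁻¹ * Real.log (1 / ν)) := by field_simp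
        _ ≤ α * β * lam := by gcongr
    nlinarith
  have hAB : (#A : ℝ) * #B ≤ β * #A * Fintype.card (Fin lam) := by
    rw [Fintype.card_fin]; nlinarith [(#A).cast_nonneg (α := ℝ)]
  have hgood (h : U → Fin lam) : ((lam : ℝ) * #A / lam * (1 - 3 * β)
      ≤ #(A.filter fun z => (h z).val < lam ∧ h z ∉ (B.erase z).image h))
      ↔ #(collisions A B h) ≤ 3 * (β * #A) := by
    have hfilter : A.filter (fun z => (h z).val < lam ∧ h z ∉ (B.erase z).image h)
        = A \ collisions A B h := by
      rw [collisions, ← filter_not]; exact filter_congr fun z _ => and_iff_right (h z).isLt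
    have hsub : collisions A B h ⊆ A := filter_subset _ _
    rw [hfilter, card_sdiff_of_subset hsub, Nat.cast_sub (card_le_card hsub),
      mul_div_cancel_left₀ _ hlam₀.ne']
    constructor <;> intro <;> linarith
  rw [filter_congr fun h _ => hgood h]
  exact card_collisions_le_ge A B hν₀ hν₁ hμ hAB
end
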